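/- (Theorem 1) Let S be a finite metric state space, P^π and P̂^π transition kernels, R^π a reward, V̄ a terminal value function, γ ∈ [0,1), and K = sup_h ‖V̂_{P̂,h}‖_L the maximum Lipschitz constant of the h-step model-based values under P̂. Then for any horizon H and state s, |V̂_{P̂,H}(s) − V̂_{P,H}(s)| ≤ K · Σ_{t=0}^{H−1} γ^{t+1} E_{s_t∼P_t^π(s)}[W(P^π(·|s_t), P̂^π(·|s_t))]. -/

import Mathlib

open Finset

/-- `p` is a probability distribution on the finite set `S`. -/
def IsDist {S : Type*} [Fintype S] (p : S → ℝ) : Prop :=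
  (∀ s, 0 ≤ p s) ∧ ∑ s, p s = 1

/-- Expectation of `f` under the distribution `p`. -/
noncomputable def expect {S : Type*} [Fintype S] (p f : S → ℝ) : ℝ := ∑ s, p s * f s

/-- `iterK P t s s'` is the `t`-step transition probability of reaching `s'` from `s`
under the Markov kernel `P` (with `iterK P 0` the point mass). -/
noncomputable def iterK {S : Type*} [Fintype S] [DecidableEq S]
    (P : S → S → ℝ) : ℕ → S → S → ℝ
  | 0, s, s' => if s' = s then 1 else 0
  | (t+1), s, s' => ∑ u, P s u * iterK P t u s'

/-- The `H`-step model-based value: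
`V̂_{Q,H}(s) = Σ_{t<H} γ^t E_{s_t∼Q_t(s)}[R(s_t)] + γ^H E_{s_H∼Q_H(s)}[V̄(s_H)]`. -/
noncomputable def mbValue {S : Type*} [Fintype S] [DecidableEq S]
    (γ : ℝ) (R Vbar : S → ℝ) (Q : S → S → ℝ) (H : ℕ) (s : S) : ℝ :=
  ∑ t ∈ Finset.range H, γ ^ t * expect (iterK Q t s) R
    + γ ^ H * expect (iterK Q H s) Vbar

/-- The interpolant `U_h`: the `H`-step value expansion that rolls out the true kernel `P`
for the first `h` steps and the approximate kernel `Phat` for the remaining `H − h` steps. -/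
noncomputable def interp {S : Type*} [Fintype S] [DecidableEq S]
    (γ : ℝ) (R Vbar : S → ℝ) (P Phat : S → S → ℝ) (H h : ℕ) (s : S) : ℝ :=
  ∑ t ∈ Finset.range h, γ ^ t * expect (iterK P t s) R
    + ∑ t ∈ Finset.Ico h H, γ ^ t * ∑ s', iterK P h s s' * expect (iterK Phat (t - h) s') R
    + γ ^ H * ∑ s', iterK P h s s' * expect (iterK Phat (H - h) s') Vbar

/-- Wasserstein-1 distance in Kantorovich–Rubinstein dual form. -/
noncomputable def wass {S : Type*} [Fintype S] [MetricSpace S] (p q : S → ℝ) : ℝ :=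
  ⨆ f : {f : S → ℝ // LipschitzWith 1 f}, (expect p f.1 - expect q f.1)

/-!
Telescope over the interpolants `U_h = interp … H h`, which roll out `P` for `h` steps and `P̂`
afterwards: `U_0 = V̂_{P̂,H}`, `U_H = V̂_{P,H}`, and, writing kernels as matrices
(`iterK P t = (of P) ^ t`), `U_h - U_{h+1} = γ^{h+1} P^h (P̂ - P) V̂_{P̂,H-h-1}`.
Since `V̂_{P̂,H-h-1}` is `K`-Lipschitz, Kantorovich–Rubinstein duality bounds `(P̂ - P) V̂` at `u`
by `K W(P(·|u), P̂(·|u))`, and the row-stochastic `P^h` preserves this pointwise bound.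
-/

open Matrix

section Development

variable {S : Type*} [Fintype S]

section Expectation

lemma expect_eq_dotProduct (p f : S → ℝ) : expect p f = p ⬝ᵥ f := rfl

lemma expect_sub_expect_eq_sum_sum {p q : S → ℝ} (hp : ∑ x, p x = 1) (hq : ∑ x, q x = 1)
    (f : S → ℝ) : expect p f - expect q f = ∑ x, ∑ y, p x * q y * (f x - f y) := by
  have hpf : ∑ x, ∑ y, p x * q y * f x = expect p f := by
    simp only [_root_.expect, mul_right_comm _ (q _), ← mul_sum, hq, mul_one]
  have hqf : ∑ x, ∑ y, p x * q y * f y = expect q f := by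
    rw [sum_comm]
    simp only [_root_.expect, mul_comm (p _), mul_assoc, ← mul_sum, hp, mul_one]
  simp only [mul_sub, sum_sub_distrib, hpf, hqf]

lemma expect_eq_expect_of_forall_eq {p q f : S → ℝ} (hp : ∑ x, p x = 1) (hq : ∑ x, q x = 1)
    (hf : ∀ x y, f x = f y) : expect p f = expect q f := by
  rw [← sub_eq_zero, expect_sub_expect_eq_sum_sum hp hq]
  exact sum_eq_zero fun x _ => sum_eq_zero fun y _ => by rw [hf x y, sub_self, mul_zero]

end Expectation

section Wasserstein

variable [MetricSpace S] {p q : S → ℝ}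

lemma bddAbove_range_expect_sub (hp : ∑ x, p x = 1) (hq : ∑ x, q x = 1) :
    BddAbove (Set.range fun g : {g : S → ℝ // LipschitzWith 1 g} =>
      expect p g.1 - expect q g.1) := by
  refine ⟨∑ x, ∑ y, |p x * q y| * dist x y, ?_⟩
  rintro _ ⟨⟨g, hg⟩, rfl⟩
  dsimp only
  rw [expect_sub_expect_eq_sum_sum hp hq]
  refine sum_le_sum fun x _ => sum_le_sum fun y _ => ?_
  calc p x * q y * (g x - g y) ≤ |p x * q y| * |g x - g y| := by
        rw [← abs_mul]; exact le_abs_self _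
    _ ≤ |p x * q y| * dist x y := by
        gcongr
        simpa [Real.dist_eq] using hg.dist_le_mul x y

lemma expect_sub_le_wass (hp : ∑ x, p x = 1) (hq : ∑ x, q x = 1) {g : S → ℝ}
    (hg : LipschitzWith 1 g) : expect p g - expect q g ≤ wass p q :=
  le_ciSup (bddAbove_range_expect_sub hp hq) ⟨g, hg⟩

lemma wass_eq_zero_of_subsingleton [Subsingleton S] (hp : ∑ x, p x = 1) (hq : ∑ x, q x = 1) :
    wass p q = 0 := by
  simp only [wass, sub_self, Real.iSup_const_zero,
    expect_eq_expect_of_forall_eq hp hq fun x y => congrArg _ (Subsingleton.elim x y)]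

lemma expect_sub_le_mul_wass (hp : ∑ x, p x = 1) (hq : ∑ x, q x = 1) {K : ℝ} (hK : 0 ≤ K)
    {f : S → ℝ} (hf : ∀ x y, |f x - f y| ≤ K * dist x y) :
    expect p f - expect q f ≤ K * wass p q := by
  rcases hK.eq_or_lt with rfl | hK
  · have hconst : ∀ x y, f x = f y := fun x y => by
      simpa [sub_eq_zero] using hf x y
    simp [expect_eq_expect_of_forall_eq hp hq hconst]
  · have hg : LipschitzWith 1 (K⁻¹ • f) := LipschitzWith.of_dist_le_mul fun x y => by
      rw [Real.dist_eq, NNReal.coe_one, one_mul, Pi.smul_apply, Pi.smul_apply, ← smul_sub,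
        abs_smul, abs_inv, abs_of_pos hK, smul_eq_mul, inv_mul_le_iff₀ hK]
      exact hf x y
    have := expect_sub_le_wass hp hq hg
    rwa [expect_eq_dotProduct, expect_eq_dotProduct, dotProduct_smul, dotProduct_smul, ← smul_sub,
      smul_eq_mul, inv_mul_le_iff₀ hK] at this

lemma abs_expect_sub_le_mul_wass (hp : ∑ x, p x = 1) (hq : ∑ x, q x = 1) {K : ℝ}
    {f : S → ℝ} (hf : ∀ x y, |f x - f y| ≤ K * dist x y) :
    |expect p f - expect q f| ≤ K * wass p q := by
  rcases lt_or_ge K 0 with hK | hK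
  · have : Subsingleton S := ⟨fun x y => dist_le_zero.1 <|
      nonpos_of_mul_nonneg_right ((abs_nonneg _).trans (hf x y)) hK⟩
    rw [wass_eq_zero_of_subsingleton hp hq,
      expect_eq_expect_of_forall_eq hp hq fun x y => congrArg f (Subsingleton.elim x y)]
    simp
  · refine abs_sub_le_iff.2 ⟨expect_sub_le_mul_wass hp hq hK hf, ?_⟩
    have hneg : ∀ x y, |(-f) x - (-f) y| ≤ K * dist x y := fun x y => by
      rw [Pi.neg_apply, Pi.neg_apply, neg_sub_neg, abs_sub_comm]
      exact hf x y
    have := expect_sub_le_mul_wass hp hq hK hneg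
    rwa [expect_eq_dotProduct, expect_eq_dotProduct, dotProduct_neg, dotProduct_neg,
      neg_sub_neg] at this

end Wasserstein

lemma abs_mulVec_apply_le_of_mem_rowStochastic [DecidableEq S] {M : Matrix S S ℝ}
    (hM : M ∈ rowStochastic ℝ S) {w c : S → ℝ} (hwc : ∀ u, |w u| ≤ c u) (s : S) :
    |(M *ᵥ w) s| ≤ (M *ᵥ c) s := by
  have hle := nonneg_mulVec_of_mem_rowStochastic hM (x := c - w)
    (fun u => sub_nonneg.2 (abs_le.1 (hwc u)).2) s
  have hge := nonneg_mulVec_of_mem_rowStochastic hM (x := c + w)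
    (fun u => neg_le_iff_add_nonneg'.1 (abs_le.1 (hwc u)).1) s
  rw [mulVec_sub, Pi.sub_apply, sub_nonneg] at hle
  rw [mulVec_add, Pi.add_apply] at hge
  exact abs_le.2 ⟨by linarith, hle⟩

section Kernel

variable [DecidableEq S]

lemma iterK_eq_pow (P : S → S → ℝ) (t : ℕ) : iterK P t = of P ^ t := by
  induction t with
  | zero => ext s s'; simp [iterK, one_apply, eq_comm]
  | succ t ih => ext s s'; simp [iterK, pow_succ', mul_apply, ih]

lemma expect_iterK (P : S → S → ℝ) (t : ℕ) (s : S) (f : S → ℝ) :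
    expect (iterK P t s) f = (of P ^ t *ᵥ f) s := by
  rw [iterK_eq_pow]; rfl

lemma mbValue_eq_sum_pow_mulVec (γ : ℝ) (R Vbar : S → ℝ) (Q : S → S → ℝ) (H : ℕ) :
    mbValue γ R Vbar Q H = ∑ t ∈ range H, γ ^ t • (of Q ^ t *ᵥ R) + γ ^ H • (of Q ^ H *ᵥ Vbar) := by
  ext s; simp [mbValue, expect_iterK]

lemma mbValue_zero (γ : ℝ) (R Vbar : S → ℝ) (Q : S → S → ℝ) : mbValue γ R Vbar Q 0 = Vbar := by
  simp [mbValue_eq_sum_pow_mulVec]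

lemma mbValue_succ (γ : ℝ) (R Vbar : S → ℝ) (Q : S → S → ℝ) (H : ℕ) :
    mbValue γ R Vbar Q (H + 1) = R + γ • (of Q *ᵥ mbValue γ R Vbar Q H) := by
  simp only [mbValue_eq_sum_pow_mulVec, sum_range_succ', pow_zero, one_smul, one_mulVec, mulVec_add,
    mulVec_sum, mulVec_smul, mulVec_mulVec, smul_add, smul_sum, smul_smul, ← pow_succ']
  abel

lemma interp_eq_sum_add_mbValue (γ : ℝ) (R Vbar : S → ℝ) (P Phat : S → S → ℝ) {H h : ℕ}
    (hh : h ≤ H) :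
    interp γ R Vbar P Phat H h = ∑ t ∈ range h, γ ^ t • (of P ^ t *ᵥ R)
      + γ ^ h • (of P ^ h *ᵥ mbValue γ R Vbar Phat (H - h)) := by
  have hvec : interp γ R Vbar P Phat H h = ∑ t ∈ range h, γ ^ t • (of P ^ t *ᵥ R)
      + ∑ t ∈ Ico h H, γ ^ t • (of P ^ h *ᵥ of Phat ^ (t - h) *ᵥ R)
      + γ ^ H • (of P ^ h *ᵥ of Phat ^ (H - h) *ᵥ Vbar) := by
    ext s
    simp only [interp, iterK_eq_pow, Pi.add_apply, Finset.sum_apply, Pi.smul_apply, smul_eq_mul]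
    rfl
  rw [hvec, mbValue_eq_sum_pow_mulVec, sum_Ico_eq_sum_range, add_assoc]
  simp only [mulVec_add, mulVec_sum, mulVec_smul, smul_add, smul_sum, smul_smul, ← pow_add,
    add_tsub_cancel_left, Nat.add_sub_cancel' hh]

end Kernel

section Interpolation

variable [DecidableEq S] (γ : ℝ) (R Vbar : S → ℝ) (P Phat : S → S → ℝ) (H : ℕ)

lemma interp_zero : interp γ R Vbar P Phat H 0 = mbValue γ R Vbar Phat H := by
  simp [interp_eq_sum_add_mbValue γ R Vbar P Phat (Nat.zero_le H)]

lemma interp_self : interp γ R Vbar P Phat H H = mbValue γ R Vbar P H := by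
  rw [interp_eq_sum_add_mbValue γ R Vbar P Phat le_rfl, Nat.sub_self, mbValue_zero,
    mbValue_eq_sum_pow_mulVec]

lemma interp_sub_interp_succ {h : ℕ} (hh : h < H) :
    interp γ R Vbar P Phat H h - interp γ R Vbar P Phat H (h + 1) =
      γ ^ (h + 1) • (of P ^ h *ᵥ (of Phat *ᵥ mbValue γ R Vbar Phat (H - (h + 1))
        - of P *ᵥ mbValue γ R Vbar Phat (H - (h + 1)))) := by
  have hH : H - h = H - (h + 1) + 1 := by omega
  rw [interp_eq_sum_add_mbValue γ R Vbar P Phat hh.le, interp_eq_sum_add_mbValue γ R Vbar P Phat hh,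
    hH, mbValue_succ, sum_range_succ, pow_succ (of P), ← mulVec_mulVec]
  simp only [mulVec_add, mulVec_sub, mulVec_smul, smul_add, smul_sub, smul_smul, ← pow_succ]
  abel

end Interpolation

lemma abs_interp_sub_interp_succ_le [DecidableEq S] [MetricSpace S] {γ : ℝ} (hγ : 0 ≤ γ)
    (R Vbar : S → ℝ) {P Phat : S → S → ℝ} (hP : of P ∈ rowStochastic ℝ S)
    (hPhat : ∀ u, ∑ v, Phat u v = 1) {K : ℝ} {H h : ℕ} (hh : h < H)
    (hLip : ∀ x y, |mbValue γ R Vbar Phat (H - (h + 1)) x - mbValue γ R Vbar Phat (H - (h + 1)) y|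
      ≤ K * dist x y) (s : S) :
    |interp γ R Vbar P Phat H h s - interp γ R Vbar P Phat H (h + 1) s| ≤
      γ ^ (h + 1) * (K * expect (iterK P h s) (fun u => wass (P u) (Phat u))) := by
  rw [← Pi.sub_apply, interp_sub_interp_succ γ R Vbar P Phat H hh, Pi.smul_apply, smul_eq_mul,
    abs_mul, abs_of_nonneg (pow_nonneg hγ _), expect_iterK]
  gcongr
  calc _ ≤ (of P ^ h *ᵥ K • fun u => wass (P u) (Phat u)) s := by
        refine abs_mulVec_apply_le_of_mem_rowStochastic (pow_mem hP h) (fun u => ?_) s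
        rw [Pi.sub_apply, abs_sub_comm]
        exact abs_expect_sub_le_mul_wass (sum_row_of_mem_rowStochastic hP u) (hPhat u) hLip
    _ = _ := by rw [mulVec_smul]; rfl

end Development

/-- Theorem 1: If `K` bounds the Lipschitz constants of all `h`-step
model-based values under the approximate kernel `P̂`, then for any horizon `H` and state `s`,
`|V̂_{P̂,H}(s) − V̂_{P,H}(s)| ≤ K Σ_{t<H} γ^{t+1} E_{s_t∼P_t(s)}[W(P(·|s_t), P̂(·|s_t))]`. -/
theorem mbValue_error_le_cumulative_model_error
    {S : Type*} [Fintype S] [DecidableEq S] [MetricSpace S]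
    (γ : ℝ) (hγ : 0 ≤ γ ∧ γ < 1) (R Vbar : S → ℝ) (P Phat : S → S → ℝ)
    (hP : ∀ s, IsDist (P s)) (hPhat : ∀ s, IsDist (Phat s))
    (K : ℝ)
    (hLip : ∀ h s s', |mbValue γ R Vbar Phat h s - mbValue γ R Vbar Phat h s'| ≤ K * dist s s')
    (H : ℕ) (s : S) :
    |mbValue γ R Vbar Phat H s - mbValue γ R Vbar P H s| ≤
      K * ∑ t ∈ Finset.range H,
        γ ^ (t+1) * expect (iterK P t s) (fun u => wass (P u) (Phat u)) := by
  have hPs : of P ∈ rowStochastic ℝ S :=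
    mem_rowStochastic_iff_sum.2 ⟨fun u v => (hP u).1 v, fun u => (hP u).2⟩
  calc |mbValue γ R Vbar Phat H s - mbValue γ R Vbar P H s|
      = |∑ h ∈ range H, (interp γ R Vbar P Phat H h s - interp γ R Vbar P Phat H (h + 1) s)| := by
        rw [sum_range_sub' (fun h => interp γ R Vbar P Phat H h s), interp_zero, interp_self]
    _ ≤ ∑ h ∈ range H, |interp γ R Vbar P Phat H h s - interp γ R Vbar P Phat H (h + 1) s| :=
        abs_sum_le_sum_abs _ _
    _ ≤ ∑ h ∈ range H, γ ^ (h + 1) * (K * expect (iterK P h s) (fun u => wass (P u) (Phat u))) :=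
        sum_le_sum fun h hh => abs_interp_sub_interp_succ_le hγ.1 R Vbar hPs (fun u => (hPhat u).2)
          (mem_range.1 hh) (hLip _) s
    _ = _ := by simp only [mul_sum, mul_left_comm K]
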